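/- Let $N \geq 2$, $k = \cos(\pi/(2N))$, $f = (1-k)/(1+k)$, $l = 1/(1+k)$, and let $M_N = l \cdot A_{C_{4N}} + \begin{pmatrix} I_{2N} & f I_{2N} \\ f I_{2N} & I_{2N} \end{pmatrix}$, where $A_{C_{4N}}$ is the adjacency matrix of the cycle graph on $4N$ vertices. Then the matrix $M_N - \frac{l}{N} e_{4N} e_{4N}^T$ is positive semidefinite, where $e_{4N}$ is the all-ones vector of length $4N$. -/

import Mathlib

/-!
The matrix is circulant on `ℤ/4N`: its `(i, j)` entry depends only on `i - j mod 4N`. Hence it is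
diagonalised by the Fourier modes, and over the reals it equals
`(1/4N) ∑ₘ λₘ cos (θₘ (i - j))` with `θₘ = 2πm/4N` and `λₘ = 1 + 2l cos θₘ + f (-1)ᵐ - 4l [m = 0]`.
Each matrix `(cos (θ (i - j)))ᵢⱼ = c cᵀ + s sᵀ` is positive semidefinite, so it suffices that
all `λₘ ≥ 0`. Since `f = 2l - 1`, `λ₀ = 0`, `λₘ = 2l (1 + cos θₘ)` for even `m`, and
`λₘ = 2l (k + cos θₘ)` for odd `m`, which is nonnegative because an odd `m` keeps `θₘ` at distance
at least `π/2N` from `π`.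
-/

open Real Finset

theorem Matrix.posSemidef_cos_sub {ι : Type*} [Finite ι] (a : ι → ℝ) :
    (Matrix.of fun i j => cos (a i - a j)).PosSemidef := by
  have h : (Matrix.of fun i j => cos (a i - a j)) =
      Matrix.vecMulVec (cos ∘ a) (star (cos ∘ a)) +
        Matrix.vecMulVec (sin ∘ a) (star (sin ∘ a)) := by
    ext i j
    simp [Matrix.vecMulVec_apply, cos_sub]
  rw [h]
  exact (Matrix.posSemidef_vecMulVec_self_star _).add (Matrix.posSemidef_vecMulVec_self_star _)

theorem Matrix.posSemidef_of_eq_sum_mul_cos {ι κ : Type*} [Finite ι] {A : Matrix ι ι ℝ}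
    (s : Finset κ) (w : κ → ℝ) (a : κ → ι → ℝ) (hw : ∀ m ∈ s, 0 ≤ w m)
    (hA : ∀ i j, A i j = ∑ m ∈ s, w m * cos (a m i - a m j)) : A.PosSemidef := by
  have h : A = ∑ m ∈ s, w m • Matrix.of fun i j => cos (a m i - a m j) := by
    ext i j
    simp [hA, Matrix.sum_apply]
  rw [h]
  exact Matrix.posSemidef_sum s fun m hm => (Matrix.posSemidef_cos_sub _).smul (hw m hm)

def cyclicDelta (n : ℕ) (t : ℤ) : ℝ := if (n : ℤ) ∣ t then 1 else 0

theorem Real.sum_range_cos_two_pi_mul_div_mul (n : ℕ) (hn : n ≠ 0) (k : ℤ) :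
    ∑ m ∈ range n, cos (2 * π * m / n * k) = n * cyclicDelta n k := by
  have hζ := Complex.isPrimitiveRoot_exp n hn
  set z := Complex.exp (2 * π * Complex.I / n) ^ k with hz_def
  have hre (m : ℕ) : cos (2 * π * m / n * k) = (z ^ m).re := by
    rw [hz_def, ← Complex.exp_int_mul, ← Complex.exp_nat_mul, ← Complex.exp_ofReal_mul_I_re]
    congr 2
    push_cast
    ring
  have hsum : ∑ m ∈ range n, z ^ m = if (n : ℤ) ∣ k then (n : ℂ) else 0 := by
    split_ifs with hk
    · simp [z, (hζ.zpow_eq_one_iff_dvd k).mpr hk]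
    · have hz : z ≠ 1 := fun h => hk ((hζ.zpow_eq_one_iff_dvd k).mp h)
      have hzn : z ^ n = 1 := by
        rw [hz_def, ← zpow_natCast, ← zpow_mul, mul_comm k, zpow_mul, zpow_natCast,
          hζ.pow_eq_one, one_zpow]
      rw [geom_sum_eq hz, hzn, sub_self, zero_div]
  simp_rw [hre, ← Complex.re_sum, hsum]
  split_ifs <;> simp [cyclicDelta, *]

theorem Fin.val_add_mod_eq_iff_dvd {n : ℕ} (i j : Fin n) (c : ℕ) :
    (i.val + c) % n = j.val ↔ (n : ℤ) ∣ (i : ℤ) - j + c := by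
  have h : (i.val + c) % n = j.val ↔ i.val + c ≡ j.val [MOD n] := by
    rw [Nat.ModEq, Nat.mod_eq_of_lt j.isLt]
  rw [h, Nat.modEq_iff_dvd, ← dvd_neg]
  push_cast
  ring_nf

theorem Fin.eq_iff_dvd_sub {n : ℕ} (i j : Fin n) : i = j ↔ (n : ℤ) ∣ (i : ℤ) - j := by
  simpa [Nat.mod_eq_of_lt i.isLt, Fin.ext_iff] using Fin.val_add_mod_eq_iff_dvd i j 0

theorem Int.two_mul_dvd_add_self_iff {p t : ℤ} (hp : p ≠ 0) :
    2 * p ∣ t + p ↔ p ∣ t ∧ ¬ 2 * p ∣ t := by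
  constructor
  · intro h
    have hpt : p ∣ t := (dvd_add_left (dvd_refl p)).mp ((Dvd.intro_left 2 rfl).trans h)
    refine ⟨hpt, fun h2 => ?_⟩
    obtain ⟨c, hc⟩ := (dvd_add_right h2).mp h
    have : p * 1 = p * (2 * c) := by linear_combination hc
    have := mul_left_cancel₀ hp this
    omega
  · rintro ⟨⟨q, rfl⟩, h⟩
    have hq : ¬ 2 ∣ q := fun ⟨r, hr⟩ => h ⟨r, by rw [hr]; ring⟩
    obtain ⟨r, rfl⟩ : ∃ r, q = 2 * r + 1 := ⟨q / 2, by omega⟩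
    exact ⟨r + 1, by ring⟩

theorem Real.neg_cos_le_cos_of_le_abs_sub_pi {a x : ℝ} (ha : 0 ≤ a) (hx₀ : 0 ≤ x)
    (hx₁ : x ≤ 2 * π) (hax : a ≤ |x - π|) : -cos a ≤ cos x := by
  rw [← cos_pi_sub]
  rcases le_abs'.mp hax with h | h
  · exact cos_le_cos_of_nonneg_of_le_pi hx₀ (by linarith) (by linarith)
  · rw [← cos_two_pi_sub x]
    exact cos_le_cos_of_nonneg_of_le_pi (by linarith) (by linarith) (by linarith)

theorem cycleAdj_eq_cyclicDelta {n : ℕ} (hn : 2 < n) (i j : Fin n) :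
    (if (i.val + 1) % n = j.val ∨ (j.val + 1) % n = i.val then (1 : ℝ) else 0) =
      cyclicDelta n ((i : ℤ) - j + 1) + cyclicDelta n ((i : ℤ) - j - 1) := by
  have hfwd := Fin.val_add_mod_eq_iff_dvd i j 1
  have hback : (j.val + 1) % n = i.val ↔ (n : ℤ) ∣ (i : ℤ) - j - 1 := by
    rw [Fin.val_add_mod_eq_iff_dvd, ← dvd_neg]
    ring_nf
  have hexcl : ¬ ((n : ℤ) ∣ (i : ℤ) - j + 1 ∧ (n : ℤ) ∣ (i : ℤ) - j - 1) := by
    rintro ⟨h₁, h₂⟩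
    have h₂ : (n : ℤ) ∣ 2 := by simpa using dvd_sub h₁ h₂
    have := Int.le_of_dvd two_pos h₂
    omega
  simp only [hfwd, hback, cyclicDelta, Nat.cast_one]
  split_ifs <;> simp_all

theorem blockDiag_eq_cyclicDelta {n p : ℕ} (hn : n = 2 * p) (f : ℝ) (i j : Fin n) :
    (if i = j then 1 else if i.val % p = j.val % p then f else 0) =
      cyclicDelta n ((i : ℤ) - j) + f * cyclicDelta n ((i : ℤ) - j + p) := by
  have hp : (p : ℤ) ≠ 0 := by have := i.isLt; omega
  have hmod : i.val % p = j.val % p ↔ (p : ℤ) ∣ (i : ℤ) - j := by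
    rw [← Nat.ModEq, Nat.modEq_iff_dvd, ← dvd_neg, neg_sub]
  have hshift : (n : ℤ) ∣ (i : ℤ) - j + p ↔ (p : ℤ) ∣ (i : ℤ) - j ∧ i ≠ j := by
    have hn' : (n : ℤ) = 2 * p := by exact_mod_cast hn
    rw [ne_eq, Fin.eq_iff_dvd_sub, hn', Int.two_mul_dvd_add_self_iff hp]
  simp only [cyclicDelta, hshift, hmod, ← Fin.eq_iff_dvd_sub]
  by_cases hij : i = j <;> simp [hij]

/-- The eigenvalue of `M_N - (l/N) e eᵀ` on the Fourier mode `j ↦ exp (2πi m j / 4N)`. -/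
noncomputable def fourierEigenvalue (N : ℕ) (l f : ℝ) (m : ℕ) : ℝ :=
  1 + 2 * l * cos (2 * π * m / (4 * N : ℕ)) + f * (-1) ^ m - if m = 0 then 4 * l else 0

theorem sum_fourierEigenvalue_mul_cos {N : ℕ} (hN : 0 < N) (l f : ℝ) (t : ℤ) :
    ∑ m ∈ range (4 * N), fourierEigenvalue N l f m * cos (2 * π * m / (4 * N : ℕ) * t) =
      (4 * N : ℕ) * (cyclicDelta (4 * N) t
        + l * (cyclicDelta (4 * N) (t + 1) + cyclicDelta (4 * N) (t - 1))
        + f * cyclicDelta (4 * N) (t + (2 * N : ℕ))) - 4 * l := by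
  have hterm (m : ℕ) : fourierEigenvalue N l f m * cos (2 * π * m / (4 * N : ℕ) * t) =
      cos (2 * π * m / (4 * N : ℕ) * t)
        + l * (cos (2 * π * m / (4 * N : ℕ) * (t + 1 : ℤ))
          + cos (2 * π * m / (4 * N : ℕ) * (t - 1 : ℤ)))
        + f * cos (2 * π * m / (4 * N : ℕ) * (t + (2 * N : ℕ) : ℤ))
        - if m = 0 then 4 * l else 0 := by
    set θ := 2 * π * m / (4 * N : ℕ) with hθ
    have hhalf : θ * (2 * N : ℕ) = m * π := by
      rw [hθ]
      field_simp
      push_cast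
      ring
    have hshift : cos (θ * (t + (2 * N : ℕ) : ℤ)) = (-1) ^ m * cos (θ * t) := by
      rw [← cos_add_nat_mul_pi, ← hhalf]
      push_cast
      ring_nf
    have hneighbours :
        cos (θ * (t + 1 : ℤ)) + cos (θ * (t - 1 : ℤ)) = 2 * cos θ * cos (θ * t) := by
      push_cast
      rw [mul_add, mul_sub, mul_one, cos_add, cos_sub]
      ring
    rw [hshift, hneighbours, fourierEigenvalue]
    split_ifs with hm
    · simp only [hθ, hm, Nat.cast_zero, mul_zero, zero_div, zero_mul, cos_zero, pow_zero]
      ring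
    · ring
  simp only [hterm, sum_sub_distrib, sum_add_distrib, ← mul_sum, sum_ite_eq', mem_range,
    sum_range_cos_two_pi_mul_div_mul _ (by omega : 4 * N ≠ 0)]
  rw [if_pos (by omega)]
  ring

theorem neg_cos_pi_div_le_cos_of_odd {N m : ℕ} (hN : 0 < N) (hm : m < 4 * N) (hodd : Odd m) :
    -cos (π / (2 * N)) ≤ cos (2 * π * m / (4 * N : ℕ)) := by
  apply neg_cos_le_cos_of_le_abs_sub_pi (by positivity) (by positivity)
  · have hm' : (m : ℝ) ≤ 4 * N := by exact_mod_cast hm.le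
    rw [div_le_iff₀ (by positivity)]
    push_cast
    nlinarith [pi_pos]
  · have hm2N : m ≠ 2 * N := by
      rintro rfl
      exact Nat.not_odd_iff_even.mpr (even_two_mul N) hodd
    have hdist : (1 : ℝ) ≤ |(m : ℝ) - 2 * N| := by
      rcases Nat.lt_or_gt_of_ne hm2N with h | h
      · have : (m : ℝ) + 1 ≤ 2 * N := by exact_mod_cast h
        rw [abs_of_neg (by linarith)]
        linarith
      · have : 2 * (N : ℝ) + 1 ≤ m := by exact_mod_cast h
        rw [abs_of_pos (by linarith)]
        linarith
    rw [show 2 * π * m / (4 * N : ℕ) - π = π / (2 * N) * ((m : ℝ) - 2 * N) by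
        push_cast; field_simp; ring,
      abs_mul, abs_of_pos (by positivity)]
    exact le_mul_of_one_le_right (by positivity) hdist

theorem fourierEigenvalue_nonneg {N m : ℕ} (hN : 0 < N) (hm : m < 4 * N) :
    0 ≤ fourierEigenvalue N (1 / (1 + cos (π / (2 * N))))
      ((1 - cos (π / (2 * N))) / (1 + cos (π / (2 * N)))) m := by
  set k := cos (π / (2 * N))
  have hN' : (1 : ℝ) ≤ N := by exact_mod_cast hN
  have hk : 0 ≤ k := cos_nonneg_of_mem_Icc
    ⟨(neg_nonpos.mpr (by positivity)).trans (by positivity),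
      div_le_div_of_nonneg_left pi_pos.le two_pos (by linarith)⟩
  have hk₁ : 0 < 1 + k := by linarith
  rw [fourierEigenvalue]
  split_ifs with hm₀
  · subst hm₀
    apply le_of_eq
    simp only [Nat.cast_zero, mul_zero, zero_div, cos_zero, pow_zero]
    field_simp
    ring
  set θ := 2 * π * m / (4 * N : ℕ)
  rw [show 1 + 2 * (1 / (1 + k)) * cos θ + (1 - k) / (1 + k) * (-1) ^ m - 0
      = ((1 + k) + 2 * cos θ + (1 - k) * (-1) ^ m) / (1 + k) by field_simp; ring]
  refine div_nonneg ?_ hk₁.le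
  rcases Nat.even_or_odd m with hev | hodd
  · rw [hev.neg_one_pow]
    linarith [neg_one_le_cos θ]
  · rw [hodd.neg_one_pow]
    linarith [neg_cos_pi_div_le_cos_of_odd hN hm hodd]

theorem MN_minus_rank_one_posSemidef (N : ℕ) (hN : 2 ≤ N) :
    let k : ℝ := Real.cos (Real.pi / (2 * N))
    let f : ℝ := (1 - k) / (1 + k)
    let l : ℝ := 1 / (1 + k)
    -- adjacency matrix of the cycle graph on 4N vertices
    let A : Matrix (Fin (4 * N)) (Fin (4 * N)) ℝ := fun i j =>
      if (i.val + 1) % (4 * N) = j.val ∨ (j.val + 1) % (4 * N) = i.val then 1 else 0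
    -- block matrix [[I_{2N}, f I_{2N}],[f I_{2N}, I_{2N}]]
    let D : Matrix (Fin (4 * N)) (Fin (4 * N)) ℝ := fun i j =>
      if i = j then 1 else if i.val % (2 * N) = j.val % (2 * N) then f else 0
    let M : Matrix (Fin (4 * N)) (Fin (4 * N)) ℝ := l • A + D
    -- all-ones rank one matrix e e^T
    let J : Matrix (Fin (4 * N)) (Fin (4 * N)) ℝ := fun _ _ => 1
    (M - (l / N) • J).PosSemidef := by
  intro k f l A D M J
  have hN₀ : 0 < N := by omega
  refine Matrix.posSemidef_of_eq_sum_mul_cos (range (4 * N))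
    (fun m => fourierEigenvalue N l f m / (4 * N : ℕ))
    (fun m i => 2 * π * m / (4 * N : ℕ) * i.val)
    (fun m hm => div_nonneg (fourierEigenvalue_nonneg hN₀ (mem_range.mp hm)) (by positivity))
    fun i j => ?_
  have hM : M i j = l * A i j + D i j := rfl
  rw [Matrix.sub_apply, Matrix.smul_apply, hM, smul_eq_mul]
  simp only [A, D, J, cycleAdj_eq_cyclicDelta (by omega : 2 < 4 * N),
    blockDiag_eq_cyclicDelta (by ring : 4 * N = 2 * (2 * N))]
  have hterm (m : ℕ) : fourierEigenvalue N l f m / (4 * N : ℕ) *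
      cos (2 * π * m / (4 * N : ℕ) * i.val - 2 * π * m / (4 * N : ℕ) * j.val) =
      ((4 * N : ℕ) : ℝ)⁻¹ *
        (fourierEigenvalue N l f m * cos (2 * π * m / (4 * N : ℕ) * ((i : ℤ) - j : ℤ))) := by
    rw [← mul_sub, Int.cast_sub, Int.cast_natCast, Int.cast_natCast]
    ring
  simp only [hterm, ← mul_sum, sum_fourierEigenvalue_mul_cos hN₀]
  push_cast
  field_simp
  ring
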